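/- Let E be a finite-dimensional real normed vector space, let D ⊆ E be an open set, and let f : E → E be differentiable on D with derivative Df Lipschitz continuous on D (i.e. there is L ≥ 0 with ‖Df(x) − Df(y)‖ ≤ L‖x − y‖ for all x, y ∈ D, in the operator norm). Suppose x* ∈ D satisfies f(x*) = 0 and Df(x*) is invertible. Then there exist δ > 0 and C > 0 such that for every x₀ with ‖x₀ − x*‖ < δ, the Newton iterates x_{k+1} = x_k − (Df(x_k))⁻¹ f(x_k) are well defined for all k and satisfy ‖x_{k+1} − x*‖ ≤ C ‖x_k − x*‖² for all k; in particular x_k → x* q-quadratically. -/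
import Mathlib

open ContinuousLinearMap

/-- If `B` is close to a unit `u`, then `B` is a unit with inverse of norm at most
`2 * ‖u⁻¹‖`. Stated for continuous linear maps on a complete normed space. -/
lemma newton_aux_inverse_bound {E : Type*} [NormedAddCommGroup E] [NormedSpace ℝ E]
    [CompleteSpace E] (u : (E →L[ℝ] E)ˣ) (B : E →L[ℝ] E)
    (h : ‖B - (u : E →L[ℝ] E)‖ * ‖((u⁻¹ : (E →L[ℝ] E)ˣ) : E →L[ℝ] E)‖ ≤ 1 / 2) :
    IsUnit B ∧ ‖Ring.inverse B‖ ≤ 2 * ‖((u⁻¹ : (E →L[ℝ] E)ˣ) : E →L[ℝ] E)‖ := by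
  set t : E →L[ℝ] E := ((u⁻¹ : (E →L[ℝ] E)ˣ) : E →L[ℝ] E) * ((u : E →L[ℝ] E) - B) with ht
  have hB' : ‖(u : E →L[ℝ] E) - B‖ * ‖((u⁻¹ : (E →L[ℝ] E)ˣ) : E →L[ℝ] E)‖ ≤ 1 / 2 := by
    rwa [norm_sub_rev] at h
  have htle : ‖t‖ ≤ 1 / 2 := by
    calc ‖t‖ ≤ ‖((u⁻¹ : (E →L[ℝ] E)ˣ) : E →L[ℝ] E)‖ * ‖(u : E →L[ℝ] E) - B‖ := norm_mul_le _ _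
    _ = ‖(u : E →L[ℝ] E) - B‖ * ‖((u⁻¹ : (E →L[ℝ] E)ˣ) : E →L[ℝ] E)‖ := mul_comm _ _
    _ ≤ 1 / 2 := hB'
  have htlt : ‖t‖ < 1 := lt_of_le_of_lt htle (by norm_num)
  set v : (E →L[ℝ] E)ˣ := Units.oneSub t htlt with hv
  have hBval : B = ((u * v : (E →L[ℝ] E)ˣ) : E →L[ℝ] E) := by
    simp only [hv, Units.val_mul, Units.val_oneSub, ht, mul_sub, mul_one]
    rw [← mul_assoc]
    simp [mul_sub]
  have hBu : IsUnit B := hBval ▸ (u * v).isUnit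
  refine ⟨hBu, ?_⟩
  have hinvB : Ring.inverse B
      = ((v⁻¹ : (E →L[ℝ] E)ˣ) : E →L[ℝ] E) * ((u⁻¹ : (E →L[ℝ] E)ˣ) : E →L[ℝ] E) := by
    rw [hBval, Ring.inverse_unit, mul_inv_rev, Units.val_mul]
  -- bound ‖v⁻¹‖ ≤ 2 using v⁻¹ = 1 + t * v⁻¹
  have hvinv : ((v⁻¹ : (E →L[ℝ] E)ˣ) : E →L[ℝ] E)
      = 1 + t * ((v⁻¹ : (E →L[ℝ] E)ˣ) : E →L[ℝ] E) := by
    have h1 : (1 - t) * ((v⁻¹ : (E →L[ℝ] E)ˣ) : E →L[ℝ] E) = 1 := by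
      have := v.mul_inv
      rwa [hv, Units.val_oneSub] at this
    rw [sub_mul, one_mul] at h1
    rw [← h1]; abel
  have hone : ‖(1 : E →L[ℝ] E)‖ ≤ 1 := ContinuousLinearMap.norm_id_le
  have hvle : ‖((v⁻¹ : (E →L[ℝ] E)ˣ) : E →L[ℝ] E)‖ ≤ 2 := by
    have h2 : ‖((v⁻¹ : (E →L[ℝ] E)ˣ) : E →L[ℝ] E)‖
        ≤ 1 + (1 / 2) * ‖((v⁻¹ : (E →L[ℝ] E)ˣ) : E →L[ℝ] E)‖ := by
      calc ‖((v⁻¹ : (E →L[ℝ] E)ˣ) : E →L[ℝ] E)‖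
          = ‖(1 : E →L[ℝ] E) + t * ((v⁻¹ : (E →L[ℝ] E)ˣ) : E →L[ℝ] E)‖ := by rw [← hvinv]
        _ ≤ ‖(1 : E →L[ℝ] E)‖ + ‖t * ((v⁻¹ : (E →L[ℝ] E)ˣ) : E →L[ℝ] E)‖ := norm_add_le _ _
        _ ≤ 1 + ‖t‖ * ‖((v⁻¹ : (E →L[ℝ] E)ˣ) : E →L[ℝ] E)‖ := add_le_add hone (norm_mul_le _ _)
        _ ≤ 1 + (1 / 2) * ‖((v⁻¹ : (E →L[ℝ] E)ˣ) : E →L[ℝ] E)‖ := by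
            have := norm_nonneg ((v⁻¹ : (E →L[ℝ] E)ˣ) : E →L[ℝ] E)
            nlinarith
    linarith
  calc ‖Ring.inverse B‖
      = ‖((v⁻¹ : (E →L[ℝ] E)ˣ) : E →L[ℝ] E) * ((u⁻¹ : (E →L[ℝ] E)ˣ) : E →L[ℝ] E)‖ := by
        rw [hinvB]
    _ ≤ ‖((v⁻¹ : (E →L[ℝ] E)ˣ) : E →L[ℝ] E)‖ * ‖((u⁻¹ : (E →L[ℝ] E)ˣ) : E →L[ℝ] E)‖ :=
        norm_mul_le _ _
    _ ≤ 2 * ‖((u⁻¹ : (E →L[ℝ] E)ˣ) : E →L[ℝ] E)‖ := by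
        have := norm_nonneg ((u⁻¹ : (E →L[ℝ] E)ˣ) : E →L[ℝ] E); nlinarith

/-- Taylor-type estimate: if the derivative is `L`-Lipschitz on `D` and the segment from
`x` to `y` lies in `D`, then `‖f y - f x - Df x (y - x)‖ ≤ L * ‖y - x‖ * ‖y - x‖`. -/
lemma newton_aux_taylor {E : Type*} [NormedAddCommGroup E] [NormedSpace ℝ E]
    (D : Set E) (f : E → E)
    (hdiff : ∀ x ∈ D, DifferentiableAt ℝ f x) (L : ℝ) (hL : 0 ≤ L)
    (hLip : ∀ x ∈ D, ∀ y ∈ D, ‖fderiv ℝ f x - fderiv ℝ f y‖ ≤ L * ‖x - y‖)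
    (x y : E) (hseg : segment ℝ x y ⊆ D) :
    ‖f y - f x - fderiv ℝ f x (y - x)‖ ≤ L * ‖y - x‖ * ‖y - x‖ := by
  set A : E →L[ℝ] E := fderiv ℝ f x
  set g : E → E := fun z => f z - A z with hg
  have hx : x ∈ segment ℝ x y := left_mem_segment ℝ x y
  have hy : y ∈ segment ℝ x y := right_mem_segment ℝ x y
  have hderiv : ∀ z ∈ segment ℝ x y,
      HasFDerivWithinAt g (fderiv ℝ f z - A) (segment ℝ x y) z := by
    intro z hz
    exact (((hdiff z (hseg hz)).hasFDerivAt).sub (A.hasFDerivAt)).hasFDerivWithinAt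
  have hbound : ∀ z ∈ segment ℝ x y, ‖fderiv ℝ f z - A‖ ≤ L * ‖y - x‖ := by
    intro z hz
    obtain ⟨a, b, ha, hb, hab, rfl⟩ := hz
    have hz' : a • x + b • y - x = b • (y - x) := by
      have : a = 1 - b := by linarith
      rw [this]; module
    calc ‖fderiv ℝ f (a • x + b • y) - A‖
        ≤ L * ‖a • x + b • y - x‖ := hLip _ (hseg ⟨a, b, ha, hb, hab, rfl⟩) x (hseg hx)
      _ = L * (b * ‖y - x‖) := by rw [hz', norm_smul, Real.norm_of_nonneg hb]
      _ ≤ L * ‖y - x‖ := by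
          have hb1 : b ≤ 1 := by linarith
          have h1 : b * ‖y - x‖ ≤ 1 * ‖y - x‖ :=
            mul_le_mul_of_nonneg_right hb1 (norm_nonneg _)
          rw [one_mul] at h1
          exact mul_le_mul_of_nonneg_left h1 hL
  have := (convex_segment x y).norm_image_sub_le_of_norm_hasFDerivWithin_le
    hderiv hbound hx hy
  have hgy : g y - g x = f y - f x - A (y - x) := by
    simp only [hg, map_sub]
    abel
  rwa [hgy] at this

set_option maxHeartbeats 1000000 in
/-- Local quadratic convergence of the exact Newton method when the derivative is
Lipschitz continuous on an open set `D` containing a non-degenerate root `x*`. -/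
theorem newton_local_quadratic_convergence
    {E : Type*} [NormedAddCommGroup E] [NormedSpace ℝ E] [FiniteDimensional ℝ E]
    (D : Set E) (hD : IsOpen D) (f : E → E)
    (hdiff : ∀ x ∈ D, DifferentiableAt ℝ f x)
    (L : ℝ) (hL : 0 ≤ L)
    (hLip : ∀ x ∈ D, ∀ y ∈ D, ‖fderiv ℝ f x - fderiv ℝ f y‖ ≤ L * ‖x - y‖)
    (xs : E) (hxs : xs ∈ D) (hroot : f xs = 0)
    (hinv : IsUnit (fderiv ℝ f xs)) :
    ∃ δ > (0 : ℝ), ∃ C > (0 : ℝ), ∀ x : ℕ → E, ‖x 0 - xs‖ < δ →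
      (∀ k, x (k + 1) = x k - Ring.inverse (fderiv ℝ f (x k)) (f (x k))) →
      (∀ k, x k ∈ D ∧ IsUnit (fderiv ℝ f (x k))) ∧
      (∀ k, ‖x (k + 1) - xs‖ ≤ C * ‖x k - xs‖ ^ 2) ∧
      Filter.Tendsto x Filter.atTop (nhds xs) := by
  obtain ⟨u, hu⟩ := hinv
  set M : ℝ := ‖((u⁻¹ : (E →L[ℝ] E)ˣ) : E →L[ℝ] E)‖ with hM
  have hM0 : 0 ≤ M := norm_nonneg _
  obtain ⟨r, hr0, hrD⟩ := Metric.isOpen_iff.mp hD xs hxs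
  set ε : ℝ := min r ((2 * (L * M + 1))⁻¹) with hε
  have hLM1 : (0 : ℝ) < L * M + 1 := by positivity
  have hε0 : 0 < ε := lt_min hr0 (by positivity)
  set C : ℝ := 2 * M * L + 1 with hC
  have hC0 : 0 < C := by positivity
  set δ : ℝ := min ε ((2 * C)⁻¹) with hδ
  have hδ0 : 0 < δ := lt_min hε0 (by positivity)
  have hδε : δ ≤ ε := min_le_left _ _
  have hδr : δ ≤ r := le_trans hδε (min_le_left _ _)
  have hδC : C * δ ≤ 1 / 2 := by
    have h1 : δ ≤ (2 * C)⁻¹ := min_le_right _ _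
    have h2 : C * (2 * C)⁻¹ = 1 / 2 := by
      field_simp
    calc C * δ ≤ C * (2 * C)⁻¹ := by nlinarith
    _ = 1 / 2 := h2
  -- key step lemma
  have key : ∀ z : E, ‖z - xs‖ < δ →
      z ∈ D ∧ IsUnit (fderiv ℝ f z) ∧
      ‖(z - Ring.inverse (fderiv ℝ f z) (f z)) - xs‖ ≤ C * ‖z - xs‖ ^ 2 := by
    intro z hz
    have hzball : z ∈ Metric.ball xs r := by
      rw [Metric.mem_ball, dist_eq_norm]; exact lt_of_lt_of_le hz hδr
    have hzD : z ∈ D := hrD hzball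
    set B : E →L[ℝ] E := fderiv ℝ f z with hB
    have hBA : ‖B - (u : E →L[ℝ] E)‖ * M ≤ 1 / 2 := by
      have h1 : ‖B - (u : E →L[ℝ] E)‖ ≤ L * ‖z - xs‖ := by
        rw [hu]; exact hLip z hzD xs hxs
      have h2 : ‖z - xs‖ ≤ ε := le_trans hz.le hδε
      have h3 : ε ≤ (2 * (L * M + 1))⁻¹ := min_le_right _ _
      have hz2 : ‖z - xs‖ ≤ (2 * (L * M + 1))⁻¹ := le_trans h2 h3
      have h4' : ‖B - (u : E →L[ℝ] E)‖ ≤ L * (2 * (L * M + 1))⁻¹ := by nlinarith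
      have h4 : ‖B - (u : E →L[ℝ] E)‖ * M ≤ L * (2 * (L * M + 1))⁻¹ * M :=
        mul_le_mul_of_nonneg_right h4' hM0
      have hkey : (L * M + 1) * (2 * (L * M + 1))⁻¹ = 1 / 2 := by
        field_simp
      have hinv0 : (0 : ℝ) ≤ (2 * (L * M + 1))⁻¹ := by positivity
      have h5 : L * (2 * (L * M + 1))⁻¹ * M ≤ 1 / 2 := by
        calc L * (2 * (L * M + 1))⁻¹ * M = (L * M) * (2 * (L * M + 1))⁻¹ := by ring
        _ ≤ (L * M + 1) * (2 * (L * M + 1))⁻¹ := by nlinarith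
        _ = 1 / 2 := hkey
      linarith
    obtain ⟨hBu, hBinv⟩ := newton_aux_inverse_bound u B hBA
    refine ⟨hzD, hBu, ?_⟩
    have hxsball : xs ∈ Metric.ball xs r := Metric.mem_ball_self hr0
    have hseg : segment ℝ z xs ⊆ D :=
      Set.Subset.trans ((convex_ball xs r).segment_subset hzball hxsball) hrD
    have htaylor := newton_aux_taylor D f hdiff L hL hLip z xs hseg
    have hBinvB : ∀ w : E, Ring.inverse B (B w) = w := by
      intro w
      have h1 : Ring.inverse B * B = 1 := Ring.inverse_mul_cancel B hBu
      have := DFunLike.congr_fun h1 w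
      simpa using this
    have halg : (z - Ring.inverse B (f z)) - xs
        = Ring.inverse B (B (z - xs) - (f z - f xs)) := by
      rw [map_sub, hBinvB, hroot]
      simp only [sub_zero]
      abel
    have hvec : B (z - xs) - (f z - f xs) = f xs - f z - B (xs - z) := by
      rw [map_sub, map_sub]
      abel
    rw [halg]
    calc ‖Ring.inverse B (B (z - xs) - (f z - f xs))‖
        ≤ ‖Ring.inverse B‖ * ‖B (z - xs) - (f z - f xs)‖ := le_opNorm _ _
      _ = ‖Ring.inverse B‖ * ‖f xs - f z - B (xs - z)‖ := by rw [hvec]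
      _ ≤ (2 * M) * (L * ‖xs - z‖ * ‖xs - z‖) :=
          mul_le_mul hBinv htaylor (norm_nonneg _) (by positivity)
      _ = 2 * M * L * ‖z - xs‖ ^ 2 := by rw [norm_sub_rev]; ring
      _ ≤ C * ‖z - xs‖ ^ 2 := by nlinarith [sq_nonneg ‖z - xs‖]
  -- contraction: if ‖z - xs‖ < δ then next error ≤ (1/2) ‖z - xs‖
  have contract : ∀ z : E, ‖z - xs‖ < δ →
      ‖(z - Ring.inverse (fderiv ℝ f z) (f z)) - xs‖ ≤ (1 / 2) * ‖z - xs‖ := by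
    intro z hz
    obtain ⟨_, _, h3⟩ := key z hz
    have h1 : C * ‖z - xs‖ ≤ C * δ := by nlinarith [norm_nonneg (z - xs)]
    calc ‖(z - Ring.inverse (fderiv ℝ f z) (f z)) - xs‖
        ≤ C * ‖z - xs‖ ^ 2 := h3
      _ = (C * ‖z - xs‖) * ‖z - xs‖ := by ring
      _ ≤ (1 / 2) * ‖z - xs‖ := by nlinarith [norm_nonneg (z - xs)]
  refine ⟨δ, hδ0, C, hC0, fun x hx0 hrec => ?_⟩
  have inv : ∀ k, ‖x k - xs‖ < δ ∧ ‖x k - xs‖ ≤ (1 / 2) ^ k * ‖x 0 - xs‖ := by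
    intro k
    induction k with
    | zero => exact ⟨hx0, by simp⟩
    | succ n ih =>
      obtain ⟨ih1, ih2⟩ := ih
      have hst := contract (x n) ih1
      rw [← hrec n] at hst
      constructor
      · calc ‖x (n + 1) - xs‖ ≤ (1 / 2) * ‖x n - xs‖ := hst
          _ < δ := by linarith
      · calc ‖x (n + 1) - xs‖ ≤ (1 / 2) * ‖x n - xs‖ := hst
          _ ≤ (1 / 2) * ((1 / 2) ^ n * ‖x 0 - xs‖) :=
              mul_le_mul_of_nonneg_left ih2 (by norm_num)
          _ = (1 / 2) ^ (n + 1) * ‖x 0 - xs‖ := by ring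
  refine ⟨fun k => ?_, fun k => ?_, ?_⟩
  · obtain ⟨h1, h2, _⟩ := key (x k) (inv k).1
    exact ⟨h1, h2⟩
  · obtain ⟨_, _, h3⟩ := key (x k) (inv k).1
    rwa [← hrec k] at h3
  · rw [tendsto_iff_norm_sub_tendsto_zero]
    apply squeeze_zero (fun k => norm_nonneg _) (fun k => (inv k).2)
    have h1 : Filter.Tendsto (fun k : ℕ => (1 / 2 : ℝ) ^ k) Filter.atTop (nhds 0) :=
      tendsto_pow_atTop_nhds_zero_of_lt_one (by norm_num) (by norm_num)
    simpa using h1.mul_const ‖x 0 - xs‖
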